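/- For each trial index i define C_i := D_{1i}·D_{2i} if (A_i, B_i) ≠ (a′, b) and C_i := −D_{1i}·D_{2i} if (A_i, B_i) = (a′, b). Let i ≥ 2 and let v ∈ {−1, +1}^{i−1} be any vector for which P((C_1, ..., C_{i−1}) = v) > 0. Then, under the per-trial assumptions (E1), (E2*), (E3), (LOC) and the time-sequentiality assumption, P(C_i = +1 | (C_1, ..., C_{i−1}) = v) ≤ 3/4. -/

import Mathlib

open MeasureTheory ProbabilityTheory
open scoped ENNReal

noncomputable def cprob {Ω : Type*} [MeasurableSpace Ω] (P : Measure Ω)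
    (m : MeasurableSpace Ω) (E : Set Ω) : Ω → ℝ :=
  P[E.indicator (fun _ => (1 : ℝ)) | m]

/-!
Conditionally on the hidden state `λ_i`, locality factorises the joint outcome probabilities
into `p(d, x)·q(e, y)`, where `p(d, x)` is the conditional probability that the first station
outputs `d` with setting `x`; since the settings are independent of `λ_i` and uniform,
`p(1, x) + p(-1, x) = 1/2`. Writing `p(1, x) = (1 + s_x)/4`, `q(1, y) = (1 + t_y)/4`, the
conditional probability of `C_i = 1` becomes
`(4 + s_a t_b + s_a t_b' + s_a' t_b' - s_a' t_b)/8`, which is at most `3/4` by the CHSH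
inequality for `s, t ∈ [-1, 1]`. Time sequentiality makes the event `(C_1, …, C_{i-1}) = v`
measurable with respect to `λ_i`, so averaging the conditional bound over it gives the claim.
-/

theorem chsh_le_two {s s' t t' : ℝ} (hs : |s| ≤ 1) (hs' : |s'| ≤ 1) (ht : |t| ≤ 1)
    (ht' : |t'| ≤ 1) : s * t + s * t' + s' * t' - s' * t ≤ 2 := by
  have h₁ : s * (t + t') ≤ |t + t'| :=
    (le_abs_self _).trans (by rw [abs_mul]; exact mul_le_of_le_one_left (abs_nonneg _) hs)
  have h₂ : s' * (t' - t) ≤ |t' - t| :=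
    (le_abs_self _).trans (by rw [abs_mul]; exact mul_le_of_le_one_left (abs_nonneg _) hs')
  have h₃ : |t + t'| + |t' - t| ≤ 2 := by
    rw [abs_le] at ht ht'
    rcases abs_cases (t + t') with ⟨h, _⟩ | ⟨h, _⟩ <;>
      rcases abs_cases (t' - t) with ⟨h', _⟩ | ⟨h', _⟩ <;> linarith
  linarith

theorem chsh_prob_le_three_quarters {a a' b b' : ℝ} (ha : a ∈ Set.Icc 0 (1/2))
    (ha' : a' ∈ Set.Icc 0 (1/2)) (hb : b ∈ Set.Icc 0 (1/2)) (hb' : b' ∈ Set.Icc 0 (1/2)) :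
    a * b + (1/2 - a) * (1/2 - b) + a * b' + (1/2 - a) * (1/2 - b')
      + a' * b' + (1/2 - a') * (1/2 - b') + a' * (1/2 - b) + (1/2 - a') * b ≤ 3/4 := by
  have habs : ∀ {u : ℝ}, u ∈ Set.Icc (0 : ℝ) (1/2) → |4 * u - 1| ≤ 1 := fun hu =>
    abs_le.2 ⟨by linarith [hu.1], by linarith [hu.2]⟩
  linear_combination chsh_le_two (habs ha) (habs ha') (habs hb) (habs hb') / 8

theorem measurable_of_forall_eq_or_eq {α β : Type*} {mα : MeasurableSpace α}
    [MeasurableSpace β] {f : α → β} {b b' : β} (hf : ∀ a, f a = b ∨ f a = b')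
    (hb : MeasurableSet {a | f a = b}) : Measurable f := by
  classical
  have : f = fun a => if f a = b then b else b' := funext fun a => by
    by_cases h : f a = b
    · simp [h]
    · simp [(hf a).resolve_left h]
  rw [this]
  exact Measurable.ite hb measurable_const measurable_const

theorem measurable_of_eq_ite_neg {Ω : Type*} {mΩ : MeasurableSpace Ω} {A B : Ω → Bool}
    {D1 D2 C : Ω → ℝ} (hA : Measurable A) (hB : Measurable B) (hD1 : Measurable D1)
    (hD2 : Measurable D2)
    (hC : ∀ ω, C ω = if A ω = false ∧ B ω = true then -(D1 ω * D2 ω) else D1 ω * D2 ω) :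
    Measurable C := by
  rw [show C = _ from funext hC]
  exact Measurable.ite
    ((hA (measurableSet_singleton false)).inter (hB (measurableSet_singleton true)))
    (hD1.mul hD2).neg (hD1.mul hD2)

theorem cprob_ae_eq_of_indep {Ω : Type*} {m₁ m m0 : MeasurableSpace Ω} {P : Measure Ω}
    [IsFiniteMeasure P] (hm₁ : m₁ ≤ m0) (hm : m ≤ m0) {E : Set Ω}
    (hE : MeasurableSet[m₁] E) (hind : Indep m₁ m P) :
    cprob P m E =ᵐ[P] fun _ => P.real E :=
  (condExp_indep_eq hm₁ hm
    (stronglyMeasurable_const.indicator hE : StronglyMeasurable[m₁] _) hind).trans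
    (.of_forall fun _ => integral_indicator_one (hm₁ _ hE))

section ConditionalProbability

variable {Ω : Type*} {m m0 : MeasurableSpace Ω} {P : Measure Ω}

theorem cprob_nonneg (E : Set Ω) : 0 ≤ᵐ[P] cprob P m E :=
  condExp_nonneg (.of_forall fun _ => Set.indicator_nonneg (fun _ _ => zero_le_one) _)

theorem cprob_ae_eq_sum [IsFiniteMeasure P] {ι : Type*} (s : Finset ι) {E : Set Ω}
    {S : ι → Set Ω} (hS : ∀ k ∈ s, MeasurableSet (S k))
    (hE : ∀ ω, E.indicator (fun _ => (1 : ℝ)) ω = ∑ k ∈ s, (S k).indicator (fun _ => 1) ω) :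
    cprob P m E =ᵐ[P] fun ω => ∑ k ∈ s, cprob P m (S k) ω := by
  have hE' : E.indicator (fun _ => (1 : ℝ)) = ∑ k ∈ s, (S k).indicator (fun _ => 1) := by
    ext ω; simp only [hE, Finset.sum_apply]
  filter_upwards
    [condExp_finsetSum (fun k hk => (integrable_const (1 : ℝ)).indicator (hS k hk)) m] with ω h
  simpa only [cprob, hE', Finset.sum_apply] using h

theorem cond_le_ofReal_of_ae_cprob_le [IsFiniteMeasure P] (hm : m ≤ m0) {V E : Set Ω}
    (hV : MeasurableSet[m] V) (hE : MeasurableSet E) {c : ℝ}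
    (hc : ∀ᵐ ω ∂P, cprob P m E ω ≤ c) : P[|V] E ≤ ENNReal.ofReal c := by
  have hint : ∫ ω in V, cprob P m E ω ∂P = P.real (V ∩ E) := by
    rw [cprob, setIntegral_condExp hm ((integrable_const 1).indicator hE) hV,
      integral_indicator_const _ hE, measureReal_restrict_apply hE, smul_eq_mul, mul_one,
      Set.inter_comm]
  have key : P (V ∩ E) ≤ ENNReal.ofReal c * P V :=
    calc P (V ∩ E) = ENNReal.ofReal (∫ ω in V, cprob P m E ω ∂P) := by
          rw [hint, ofReal_measureReal]
      _ ≤ ENNReal.ofReal (∫ _ in V, c ∂P) := ENNReal.ofReal_le_ofReal <|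
          integral_mono_ae integrable_condExp.integrableOn (integrableOn_const (by finiteness))
            (ae_restrict_of_ae hc)
      _ = ENNReal.ofReal c * P V := by
          rw [setIntegral_const, smul_eq_mul, ENNReal.ofReal_mul measureReal_nonneg,
            ofReal_measureReal, mul_comm]
  calc P[|V] E = (P V)⁻¹ * P (V ∩ E) := cond_apply (hm _ hV) P E
    _ ≤ (P V)⁻¹ * (ENNReal.ofReal c * P V) := by gcongr
    _ = P V * (ENNReal.ofReal c / P V) := by rw [div_eq_mul_inv]; ring
    _ ≤ ENNReal.ofReal c := ENNReal.mul_div_le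

end ConditionalProbability

section SingleTrial

variable {Ω : Type*} {m m0 : MeasurableSpace Ω} {P : Measure Ω}

def outcomeEvent (D : Ω → ℝ) (X : Ω → Bool) (d : ℝ) (x : Bool) : Set Ω :=
  {ω | D ω = d ∧ X ω = x}

variable {D : Ω → ℝ} {X : Ω → Bool}

theorem measurableSet_outcomeEvent (hD : Measurable D) (hX : Measurable X) (d : ℝ) (x : Bool) :
    MeasurableSet (outcomeEvent D X d x) :=
  (hD (measurableSet_singleton d)).inter (hX (measurableSet_singleton x))

theorem measurableSet_comap_outcomeEvent (d : ℝ) (x : Bool) :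
    MeasurableSet[MeasurableSpace.comap (fun ω => (D ω, X ω)) inferInstance]
      (outcomeEvent D X d x) :=
  ⟨{d} ×ˢ {x}, (measurableSet_singleton d).prod (measurableSet_singleton x),
    by ext ω; simp [outcomeEvent]⟩

theorem measureReal_setOf_eq_eq_half [IsProbabilityMeasure P] (hX : Measurable X)
    (h : P {ω | X ω = true} = 1/2) (x : Bool) : P.real {ω | X ω = x} = 1/2 := by
  have hx : P {ω | X ω = x} = 1/2 := by
    cases x
    · rw [show {ω | X ω = false} = {ω | X ω = true}ᶜ by ext; simp,
        prob_compl_eq_one_sub (s := {ω | X ω = true}) (hX (measurableSet_singleton true)), h,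
        ENNReal.sub_half ENNReal.one_ne_top]
    · exact h
  simp [measureReal_def, hx]

theorem ae_cprob_outcomeEvent [IsProbabilityMeasure P] (hm : m ≤ m0) (hD : Measurable D)
    (hX : Measurable X) (hDv : ∀ ω, D ω = 1 ∨ D ω = -1) (hXhalf : P {ω | X ω = true} = 1/2)
    (hind : Indep (MeasurableSpace.comap X inferInstance) m P) :
    ∀ᵐ ω ∂P, ∀ x,
      cprob P m (outcomeEvent D X (-1) x) ω = 1/2 - cprob P m (outcomeEvent D X 1 x) ω ∧
        cprob P m (outcomeEvent D X 1 x) ω ∈ Set.Icc 0 (1/2) := by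
  refine ae_all_iff.2 fun x => ?_
  have hsplit := cprob_ae_eq_sum (P := P) (m := m) (E := {ω | X ω = x}) Finset.univ
    (S := ![outcomeEvent D X 1 x, outcomeEvent D X (-1) x])
    (fun k _ => by fin_cases k <;> exact measurableSet_outcomeEvent hD hX _ _) fun ω => by
      rcases hDv ω with h | h <;> by_cases hx : X ω = x <;>
        simp [outcomeEvent, Set.indicator_apply, h, hx] <;> norm_num
  have hhalf := cprob_ae_eq_of_indep (E := {ω | X ω = x}) hX.comap_le hm
    ⟨{x}, measurableSet_singleton x, rfl⟩ hind
  filter_upwards [hsplit, hhalf, cprob_nonneg (P := P) (m := m) (outcomeEvent D X 1 x),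
    cprob_nonneg (P := P) (m := m) (outcomeEvent D X (-1) x)] with ω hs hh h₁ h₂
  rw [measureReal_setOf_eq_eq_half hX hXhalf] at hh
  simp only [Fin.sum_univ_two, Matrix.cons_val_zero, Matrix.cons_val_one] at hs
  simp only [Pi.zero_apply] at h₁ h₂
  exact ⟨by linarith, by linarith, by linarith⟩

theorem ae_cprob_eq_one_le_three_quarters [IsProbabilityMeasure P] (hm : m ≤ m0)
    {A B : Ω → Bool} {D1 D2 C : Ω → ℝ} (hA : Measurable A) (hB : Measurable B)
    (hD1 : Measurable D1) (hD2 : Measurable D2)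
    (hD1v : ∀ ω, D1 ω = 1 ∨ D1 ω = -1) (hD2v : ∀ ω, D2 ω = 1 ∨ D2 ω = -1)
    (hAhalf : P {ω | A ω = true} = 1/2) (hBhalf : P {ω | B ω = true} = 1/2)
    (hAind : Indep (MeasurableSpace.comap A inferInstance) m P)
    (hBind : Indep (MeasurableSpace.comap B inferInstance) m P)
    (hLOC : ∀ E1 E2 : Set Ω,
      MeasurableSet[MeasurableSpace.comap (fun ω => (D1 ω, A ω)) inferInstance] E1 →
      MeasurableSet[MeasurableSpace.comap (fun ω => (D2 ω, B ω)) inferInstance] E2 →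
      cprob P m (E1 ∩ E2) =ᵐ[P] fun ω => cprob P m E1 ω * cprob P m E2 ω)
    (hC : ∀ ω, C ω = if A ω = false ∧ B ω = true then -(D1 ω * D2 ω) else D1 ω * D2 ω) :
    ∀ᵐ ω ∂P, cprob P m {ω | C ω = 1} ω ≤ 3/4 := by
  have hprod (d : ℝ) (x : Bool) (d' : ℝ) (y : Bool) :
      cprob P m (outcomeEvent D1 A d x ∩ outcomeEvent D2 B d' y) =ᵐ[P]
        fun ω => cprob P m (outcomeEvent D1 A d x) ω * cprob P m (outcomeEvent D2 B d' y) ω :=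
    hLOC _ _ (measurableSet_comap_outcomeEvent d x) (measurableSet_comap_outcomeEvent d' y)
  -- `C = 1` iff the outcomes agree, except under the settings `(a′, b) = (false, true)`
  have hsum := cprob_ae_eq_sum (P := P) (m := m) (E := {ω | C ω = 1}) Finset.univ
    (S := ![outcomeEvent D1 A 1 true ∩ outcomeEvent D2 B 1 true,
      outcomeEvent D1 A (-1) true ∩ outcomeEvent D2 B (-1) true,
      outcomeEvent D1 A 1 true ∩ outcomeEvent D2 B 1 false,
      outcomeEvent D1 A (-1) true ∩ outcomeEvent D2 B (-1) false,
      outcomeEvent D1 A 1 false ∩ outcomeEvent D2 B 1 false,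
      outcomeEvent D1 A (-1) false ∩ outcomeEvent D2 B (-1) false,
      outcomeEvent D1 A 1 false ∩ outcomeEvent D2 B (-1) true,
      outcomeEvent D1 A (-1) false ∩ outcomeEvent D2 B 1 true])
    (fun k _ => by
      fin_cases k <;>
        exact (measurableSet_outcomeEvent hD1 hA _ _).inter
          (measurableSet_outcomeEvent hD2 hB _ _))
    fun ω => by
      rcases hD1v ω with h1 | h1 <;> rcases hD2v ω with h2 | h2 <;>
        cases hA' : A ω <;> cases hB' : B ω <;>
        simp [outcomeEvent, Set.indicator_apply, Fin.sum_univ_eight, hC ω, h1, h2, hA', hB'] <;>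
        norm_num
  filter_upwards [hsum, hprod 1 true 1 true, hprod (-1) true (-1) true, hprod 1 true 1 false,
    hprod (-1) true (-1) false, hprod 1 false 1 false, hprod (-1) false (-1) false,
    hprod 1 false (-1) true, hprod (-1) false 1 true,
    ae_cprob_outcomeEvent hm hD1 hA hD1v hAhalf hAind,
    ae_cprob_outcomeEvent hm hD2 hB hD2v hBhalf hBind]
    with ω hs h₁ h₂ h₃ h₄ h₅ h₆ h₇ h₈ hp hq
  simp only [Fin.sum_univ_eight, Matrix.cons_val] at hs
  rw [hs, h₁, h₂, h₃, h₄, h₅, h₆, h₇, h₈,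
    (hp true).1, (hp false).1, (hq true).1, (hq false).1]
  exact chsh_prob_le_three_quarters (hp true).2 (hp false).2 (hq true).2 (hq false).2

end SingleTrial

-- Settings `a, a′` are `true, false` (likewise `b, b′`); paper's trial `i` is index `i - 1`.
theorem stmt9_general {Ω : Type*} [MeasurableSpace Ω] (P : Measure Ω) [IsProbabilityMeasure P]
    {Λ : ℕ → Type*} [∀ n, MeasurableSpace (Λ n)] (lam : ∀ n, Ω → Λ n)
    (hlam : ∀ n, Measurable (lam n))
    (A B : ℕ → Ω → Bool) (hA : ∀ n, Measurable (A n)) (hB : ∀ n, Measurable (B n))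
    (D1 D2 : ℕ → Ω → ℝ) (hD1 : ∀ n, Measurable (D1 n)) (hD2 : ∀ n, Measurable (D2 n))
    (hD1v : ∀ n ω, D1 n ω = 1 ∨ D1 n ω = -1) (hD2v : ∀ n ω, D2 n ω = 1 ∨ D2 n ω = -1)
    (hE2 : ∀ n, P {ω | A n ω = true} = 1/2 ∧ P {ω | B n ω = true} = 1/2)
    (hE3 : ∀ n, IndepFun (A n) (lam n) P ∧ IndepFun (B n) (lam n) P)
    (hLOC : ∀ n, ∀ E1 E2 : Set Ω,
      MeasurableSet[MeasurableSpace.comap (fun ω => (D1 n ω, A n ω)) inferInstance] E1 →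
      MeasurableSet[MeasurableSpace.comap (fun ω => (D2 n ω, B n ω)) inferInstance] E2 →
      cprob P (MeasurableSpace.comap (lam n) inferInstance) (E1 ∩ E2) =ᵐ[P]
        fun ω => cprob P (MeasurableSpace.comap (lam n) inferInstance) E1 ω *
          cprob P (MeasurableSpace.comap (lam n) inferInstance) E2 ω)
    (hTS : ∀ n j, j < n →
      MeasurableSet[MeasurableSpace.comap (lam n) inferInstance] {ω | D1 j ω = 1} ∧
      MeasurableSet[MeasurableSpace.comap (lam n) inferInstance] {ω | D1 j ω = -1} ∧
      MeasurableSet[MeasurableSpace.comap (lam n) inferInstance] {ω | D2 j ω = 1} ∧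
      MeasurableSet[MeasurableSpace.comap (lam n) inferInstance] {ω | D2 j ω = -1} ∧
      MeasurableSet[MeasurableSpace.comap (lam n) inferInstance] {ω | A j ω = true} ∧
      MeasurableSet[MeasurableSpace.comap (lam n) inferInstance] {ω | A j ω = false} ∧
      MeasurableSet[MeasurableSpace.comap (lam n) inferInstance] {ω | B j ω = true} ∧
      MeasurableSet[MeasurableSpace.comap (lam n) inferInstance] {ω | B j ω = false})
    (C : ℕ → Ω → ℝ)
    (hC : ∀ n ω, C n ω = if A n ω = false ∧ B n ω = true
        then -(D1 n ω * D2 n ω) else D1 n ω * D2 n ω)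
    (i : ℕ) (v : Fin i → ℝ) :
    P[|{ω | ∀ j : Fin i, C j ω = v j}] {ω | C i ω = 1} ≤ 3/4 := by
  have hm : MeasurableSpace.comap (lam i) inferInstance ≤ ‹MeasurableSpace Ω› :=
    (hlam i).comap_le
  have hpast (j : ℕ) (hj : j < i) :
      Measurable[MeasurableSpace.comap (lam i) inferInstance] (C j) := by
    obtain ⟨hD1j, -, hD2j, -, hAj, -, hBj, -⟩ := hTS i j hj
    exact measurable_of_eq_ite_neg
      (measurable_of_forall_eq_or_eq (fun ω => Bool.eq_false_or_eq_true (A j ω)) hAj)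
      (measurable_of_forall_eq_or_eq (fun ω => Bool.eq_false_or_eq_true (B j ω)) hBj)
      (measurable_of_forall_eq_or_eq (hD1v j) hD1j)
      (measurable_of_forall_eq_or_eq (hD2v j) hD2j)
      (hC j)
  have hV : MeasurableSet[MeasurableSpace.comap (lam i) inferInstance]
      {ω | ∀ j : Fin i, C j ω = v j} := by
    simp only [Set.ofPred_forall]
    exact .iInter fun j => hpast j j.2 (measurableSet_singleton _)
  have hCi : Measurable (C i) :=
    measurable_of_eq_ite_neg (hA i) (hB i) (hD1 i) (hD2 i) (hC i)
  calc P[|{ω | ∀ j : Fin i, C j ω = v j}] {ω | C i ω = 1}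
      _ ≤ ENNReal.ofReal (3/4) :=
        cond_le_ofReal_of_ae_cprob_le hm hV (hCi (measurableSet_singleton 1)) <|
          ae_cprob_eq_one_le_three_quarters hm (hA i) (hB i) (hD1 i) (hD2 i) (hD1v i) (hD2v i)
            (hE2 i).1 (hE2 i).2 (hE3 i).1 (hE3 i).2 (hLOC i) (hC i)
      _ = 3/4 := by rw [ENNReal.ofReal_div_of_pos (by norm_num)]; simp

/-- repeated-trials setting (trials indexed by `ℕ`, trial `i+1` of the
paper being index `i` here).  With `C_i := D_{1i}·D_{2i}` except `C_i := −D_{1i}·D_{2i}`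
when `(A_i,B_i) = (a′,b)`, under the per-trial assumptions (E1), (E2*), (E3), (LOC)
and time sequentiality, for every `i ≥ 1` and every `±1`-vector `v` of length `i`
with `P((C_0,…,C_{i−1}) = v) > 0`,
`P(C_i = +1 | (C_0,…,C_{i−1}) = v) ≤ 3/4`.
Settings `a, a′` are modelled by `true, false : Bool` (likewise `b, b′`). -/
theorem stmt9 {Ω : Type*} [MeasurableSpace Ω] (P : Measure Ω) [IsProbabilityMeasure P]
    {Λ : ℕ → Type*} [∀ n, MeasurableSpace (Λ n)] (lam : ∀ n, Ω → Λ n)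
    (hlam : ∀ n, Measurable (lam n))
    (A B : ℕ → Ω → Bool) (hA : ∀ n, Measurable (A n)) (hB : ∀ n, Measurable (B n))
    (D1 D2 : ℕ → Ω → ℝ) (hD1 : ∀ n, Measurable (D1 n)) (hD2 : ∀ n, Measurable (D2 n))
    (hD1v : ∀ n ω, D1 n ω = 1 ∨ D1 n ω = -1) (hD2v : ∀ n ω, D2 n ω = 1 ∨ D2 n ω = -1)
    (hE1 : ∀ n, IndepFun (A n) (B n) P)
    (hE2 : ∀ n, P {ω | A n ω = true} = 1/2 ∧ P {ω | B n ω = true} = 1/2)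
    (hE3 : ∀ n, IndepFun (A n) (lam n) P ∧ IndepFun (B n) (lam n) P)
    (hLOC : ∀ n, ∀ E1 E2 : Set Ω,
      MeasurableSet[MeasurableSpace.comap (fun ω => (D1 n ω, A n ω)) inferInstance] E1 →
      MeasurableSet[MeasurableSpace.comap (fun ω => (D2 n ω, B n ω)) inferInstance] E2 →
      cprob P (MeasurableSpace.comap (lam n) inferInstance) (E1 ∩ E2) =ᵐ[P]
        fun ω => cprob P (MeasurableSpace.comap (lam n) inferInstance) E1 ω *
          cprob P (MeasurableSpace.comap (lam n) inferInstance) E2 ω)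
    (hTS : ∀ n j, j < n →
      MeasurableSet[MeasurableSpace.comap (lam n) inferInstance] {ω | D1 j ω = 1} ∧
      MeasurableSet[MeasurableSpace.comap (lam n) inferInstance] {ω | D1 j ω = -1} ∧
      MeasurableSet[MeasurableSpace.comap (lam n) inferInstance] {ω | D2 j ω = 1} ∧
      MeasurableSet[MeasurableSpace.comap (lam n) inferInstance] {ω | D2 j ω = -1} ∧
      MeasurableSet[MeasurableSpace.comap (lam n) inferInstance] {ω | A j ω = true} ∧
      MeasurableSet[MeasurableSpace.comap (lam n) inferInstance] {ω | A j ω = false} ∧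
      MeasurableSet[MeasurableSpace.comap (lam n) inferInstance] {ω | B j ω = true} ∧
      MeasurableSet[MeasurableSpace.comap (lam n) inferInstance] {ω | B j ω = false})
    (C : ℕ → Ω → ℝ)
    (hC : ∀ n ω, C n ω = if A n ω = false ∧ B n ω = true
        then -(D1 n ω * D2 n ω) else D1 n ω * D2 n ω)
    (i : ℕ) (hi : 1 ≤ i) (v : Fin i → ℝ) (hv : ∀ j, v j = 1 ∨ v j = -1)
    (hpos : 0 < P {ω | ∀ j : Fin i, C j ω = v j}) :
    P[|{ω | ∀ j : Fin i, C j ω = v j}] {ω | C i ω = 1} ≤ 3/4 :=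
  stmt9_general P lam hlam A B hA hB D1 D2 hD1 hD2 hD1v hD2v hE2 hE3 hLOC hTS C hC i v
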